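/- arXiv:2406.16705 — 2 statements merged into one kernel-verified Lean document; each statement's English description precedes it below -/
import Mathlib

section
/- Every 2-cycle on {1,...,n} is a symmetric-difference sum of finitely many tetrahedra: there exist 4-element subsets A_1,...,A_k of {1,...,n} such that C equals the iterated symmetric difference of the tetrahedra T_{A_1},...,T_{A_k}. -/
/-- A 2-cycle on `{1,...,n}` is a set `C` of 3-element subsets of `{1,...,n}` such that
every 2-element subset is contained in an even number of members of `C`. -/
def IsTwoCycle (n : ℕ) (C : Finset (Finset (Fin n))) : Prop :=
  (∀ f ∈ C, f.card = 3) ∧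
  ∀ p : Finset (Fin n), p.card = 2 → Even (C.filter (fun f => p ⊆ f)).card

/-- The tetrahedron `T_A` of a 4-element set `A`: the set of all four
3-element subsets of `A`. -/
def tetrahedron {n : ℕ} (A : Finset (Fin n)) : Finset (Finset (Fin n)) :=
  Finset.powersetCard 3 A

/-!
Cone off a vertex `v`. If `t ∈ C` avoids `v`, then `t` is the only face of `T_{t ∪ {v}}` avoiding
`v`, so adding this tetrahedron to `C` gives a 2-cycle with one face fewer avoiding `v`. When
every face contains `v`, each face `f` is the only face containing the edge `f \ {v}`, so parity
forces the cycle to be empty.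
-/

open Finset

section Parity

variable {α : Type*} [DecidableEq α]

theorem Finset.card_symmDiff_add_two_mul_card_inter (s t : Finset α) :
    #(symmDiff s t) + 2 * #(s ∩ t) = #s + #t := by
  have hsub : #(s ∩ t) ≤ #(s ∪ t) := card_le_card inter_subset_union
  rw [symmDiff_eq_sup_sdiff_inf, sup_eq_union, inf_eq_inter,
    card_sdiff_of_subset inter_subset_union, ← card_union_add_card_inter]
  omega

theorem Finset.even_card_symmDiff {s t : Finset α} (hs : Even #s) (ht : Even #t) :
    Even #(symmDiff s t) := by
  have h := card_symmDiff_add_two_mul_card_inter s t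
  have hst : Even (#s + #t) := hs.add ht
  rw [← h, Nat.even_add] at hst
  exact hst.2 (even_two_mul _)

theorem Finset.filter_symmDiff (q : α → Prop) [DecidablePred q] (s t : Finset α) :
    (symmDiff s t).filter q = symmDiff (s.filter q) (t.filter q) := by
  ext a
  simp only [mem_filter, mem_symmDiff]
  tauto

end Parity

section TwoCycles

variable {n : ℕ}

theorem IsTwoCycle.symmDiff {C D : Finset (Finset (Fin n))} (hC : IsTwoCycle n C)
    (hD : IsTwoCycle n D) : IsTwoCycle n (symmDiff C D) := by
  refine ⟨fun f hf => ?_, fun p hp => ?_⟩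
  · rcases mem_symmDiff.1 hf with ⟨hfC, -⟩ | ⟨hfD, -⟩
    exacts [hC.1 f hfC, hD.1 f hfD]
  · rw [filter_symmDiff]
    exact even_card_symmDiff (hC.2 p hp) (hD.2 p hp)

theorem isTwoCycle_tetrahedron {A : Finset (Fin n)} (hA : #A = 4) :
    IsTwoCycle n (tetrahedron A) := by
  refine ⟨fun f hf => (mem_powersetCard.1 hf).2, fun p hp => ?_⟩
  by_cases hpA : p ⊆ A
  · rw [tetrahedron, card_filter_powersetCard_subset p A 3 hpA (by omega), hA, hp]
    exact even_two
  · rw [filter_eq_empty_iff.2 fun f hf hpf => hpA (hpf.trans (mem_powersetCard.1 hf).1),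
      card_empty]
    exact .zero

theorem IsTwoCycle.eq_empty_of_forall_mem {C : Finset (Finset (Fin n))} (hC : IsTwoCycle n C)
    {v : Fin n} (hv : ∀ f ∈ C, v ∈ f) : C = ∅ := by
  by_contra hne
  obtain ⟨f, hf⟩ := nonempty_iff_ne_empty.2 hne
  have hedge : #(f.erase v) = 2 := by rw [card_erase_of_mem (hv f hf), hC.1 f hf]
  have honly : C.filter (f.erase v ⊆ ·) = {f} := by
    ext g
    simp only [mem_filter, mem_singleton]
    constructor
    · rintro ⟨hg, hedge_sub⟩
      have hfg : f ⊆ g := by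
        rw [← insert_erase (hv f hf)]
        exact insert_subset (hv g hg) hedge_sub
      exact (eq_of_subset_of_card_le hfg (by rw [hC.1 f hf, hC.1 g hg])).symm
    · rintro rfl
      exact ⟨hf, erase_subset v g⟩
  have := hC.2 _ hedge
  rw [honly, card_singleton] at this
  exact Nat.not_even_one this

theorem filter_notMem_tetrahedron_insert {v : Fin n} {t : Finset (Fin n)} (hvt : v ∉ t)
    (ht : #t = 3) : (tetrahedron (insert v t)).filter (v ∉ ·) = {t} := by
  ext f
  simp only [tetrahedron, mem_filter, mem_powersetCard, mem_singleton]
  constructor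
  · rintro ⟨⟨hf, hf3⟩, hvf⟩
    rw [subset_insert_iff_of_notMem hvf] at hf
    exact eq_of_subset_of_card_le hf (by rw [ht, hf3])
  · rintro rfl
    exact ⟨⟨subset_insert v f, ht⟩, hvt⟩

def IsSumOfTetrahedra (C : Finset (Finset (Fin n))) : Prop :=
  ∃ l : List (Finset (Fin n)), (∀ A ∈ l, #A = 4) ∧ C = (l.map tetrahedron).foldr symmDiff ∅

theorem isSumOfTetrahedra_empty : IsSumOfTetrahedra (∅ : Finset (Finset (Fin n))) :=
  ⟨[], by simp, rfl⟩

theorem IsSumOfTetrahedra.of_symmDiff_tetrahedron {C : Finset (Finset (Fin n))}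
    {A : Finset (Fin n)} (hA : #A = 4) (h : IsSumOfTetrahedra (symmDiff C (tetrahedron A))) :
    IsSumOfTetrahedra C := by
  obtain ⟨l, hl, hsum⟩ := h
  refine ⟨A :: l, List.forall_mem_cons.2 ⟨hA, hl⟩, ?_⟩
  rw [List.map_cons, List.foldr_cons, ← hsum, symmDiff_comm C, symmDiff_symmDiff_cancel_left]

theorem IsTwoCycle.isSumOfTetrahedra {C : Finset (Finset (Fin n))} (v : Fin n)
    (hC : IsTwoCycle n C) : IsSumOfTetrahedra C := by
  induction hk : #(C.filter (v ∉ ·)) using Nat.strong_induction_on generalizing C with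
  | _ k ih =>
    obtain hemp | ⟨t, ht⟩ := (C.filter (v ∉ ·)).eq_empty_or_nonempty
    · rw [filter_eq_empty_iff] at hemp
      rw [hC.eq_empty_of_forall_mem fun f hf => not_not.1 (hemp hf)]
      exact isSumOfTetrahedra_empty
    obtain ⟨htC, hvt⟩ := mem_filter.1 ht
    have hA : #(insert v t) = 4 := by rw [card_insert_of_notMem hvt, hC.1 t htC]
    refine .of_symmDiff_tetrahedron hA (ih _ ?_ (hC.symmDiff (isTwoCycle_tetrahedron hA)) rfl)
    rw [filter_symmDiff, filter_notMem_tetrahedron_insert hvt (hC.1 t htC),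
      symmDiff_of_ge (singleton_subset_iff.2 ht), sdiff_singleton_eq_erase, ← hk]
    exact card_erase_lt_of_mem ht

end TwoCycles

/-- Every 2-cycle on `{1,...,n}` is a symmetric-difference sum of finitely many
tetrahedra. -/
theorem isTwoCycle_eq_sum_of_tetrahedra (n : ℕ) (C : Finset (Finset (Fin n)))
    (hC : IsTwoCycle n C) :
    ∃ l : List (Finset (Fin n)),
      (∀ A ∈ l, A.card = 4) ∧
      C = (l.map tetrahedron).foldr symmDiff ∅ := by
  cases n with
  | zero =>
    have hC_empty : C = ∅ := eq_empty_of_forall_notMem fun f hf => by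
      simpa [hC.1 f hf] using card_le_univ f
    rw [hC_empty]
    exact isSumOfTetrahedra_empty
  | succ => exact hC.isSumOfTetrahedra 0
end

section
/- Let K be a finite connected simple graph with V vertices and E edges. Then the number of cellular 2-cycles in K² equals 2^{(E-V+1)²}. -/
/-- A 1-cycle in a simple graph `G` is a set `C` of edges of `G` such that every
vertex is incident to an even number of edges of `C`. -/
def IsOneCycle {V : Type*} [DecidableEq V] (G : SimpleGraph V) (C : Finset (Sym2 V)) : Prop :=
  (∀ e ∈ C, e ∈ G.edgeSet) ∧ ∀ v : V, Even (C.filter (fun e => v ∈ e)).card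

/-- A cellular 2-cycle in `K²` is a set `C` of ordered pairs of edges of `K` such that
for every edge `σ`, both sections `{τ : (σ,τ) ∈ C}` and `{τ : (τ,σ) ∈ C}` are 1-cycles. -/
def IsCellular2Cycle {V : Type*} [DecidableEq V] (G : SimpleGraph V)
    (C : Finset (Sym2 V × Sym2 V)) : Prop :=
  (∀ p ∈ C, p.1 ∈ G.edgeSet ∧ p.2 ∈ G.edgeSet) ∧
  ∀ σ : Sym2 V,
    IsOneCycle G ((C.filter (fun p => p.1 = σ)).image Prod.snd) ∧
    IsOneCycle G ((C.filter (fun p => p.2 = σ)).image Prod.fst)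

/-
Over `𝔽₂` a 1-cycle is a vector of the cycle space `Z = ker ∂`, where `∂ : 𝔽₂^E → 𝔽₂^V` is the
incidence matrix. For connected `K` the image of `∂` is everything of coordinate sum zero (connect
any two vertices by a walk), so `dim Z = E - V + 1`. Reading a set of pairs of edges as its
indicator matrix in `𝔽₂^(E × E)`, the cellular 2-cycles are exactly the matrices whose rows and
columns all lie in `Z`, that is `Z ⊗ Z`. Writing `Z` as the column space of a matrix `B` with a left
inverse `L`, the map `M ↦ L M Lᵀ` identifies these matrices with all `d × d` matrices, `d = dim Z`.
-/

open Module Matrix Finset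

theorem Matrix.transpose_mul_apply_eq_mulVec {R l m n : Type*} [CommSemiring R] [Fintype m]
    (M : Matrix l m R) (N : Matrix m n R) (j : n) : (M * N)ᵀ j = M *ᵥ Nᵀ j := by
  rw [transpose_mul, mul_apply_eq_vecMul, vecMul_transpose]

namespace Submodule

variable {K ι : Type*} [Field K]

def rowColMatrices (Z : Submodule K (ι → K)) : Submodule K (Matrix ι ι K) where
  carrier := {m | ∀ i, m i ∈ Z ∧ mᵀ i ∈ Z}
  add_mem' hm hn i := ⟨Z.add_mem (hm i).1 (hn i).1, Z.add_mem (hm i).2 (hn i).2⟩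
  zero_mem' _ := ⟨Z.zero_mem, Z.zero_mem⟩
  smul_mem' c _ hm i := ⟨Z.smul_mem c (hm i).1, Z.smul_mem c (hm i).2⟩

theorem mem_rowColMatrices {Z : Submodule K (ι → K)} {m : Matrix ι ι K} :
    m ∈ Z.rowColMatrices ↔ ∀ i, m i ∈ Z ∧ mᵀ i ∈ Z :=
  Iff.rfl

section Coordinates

variable {κ : Type*} [Fintype κ] {Z : Submodule K (ι → K)} {B : Matrix ι κ K}
  {L : Matrix κ ι K}

theorem mul_mul_transpose_mem_rowColMatrices (hB : ∀ c, B *ᵥ c ∈ Z) (A : Matrix κ κ K) :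
    B * A * Bᵀ ∈ Z.rowColMatrices := fun i =>
  ⟨by rw [mul_apply_eq_vecMul, vecMul_transpose]; exact hB _,
    by rw [Matrix.mul_assoc, transpose_mul_apply_eq_mulVec]; exact hB _⟩

variable [Fintype ι]

theorem mul_mul_eq_self_of_forall_transpose_mem (hBL : ∀ z ∈ Z, B *ᵥ (L *ᵥ z) = z)
    {m : Matrix ι ι K} (hm : ∀ j, mᵀ j ∈ Z) : B * L * m = m :=
  transpose_injective <| funext fun j => by
    rw [transpose_mul_apply_eq_mulVec, ← mulVec_mulVec, hBL _ (hm j)]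

variable [DecidableEq κ]

def rowColMatricesEquiv (hLB : L * B = 1) (hB : ∀ c, B *ᵥ c ∈ Z)
    (hBL : ∀ z ∈ Z, B *ᵥ (L *ᵥ z) = z) : Z.rowColMatrices ≃ₗ[K] Matrix κ κ K where
  toFun m := L * (m : Matrix ι ι K) * Lᵀ
  invFun A := ⟨B * A * Bᵀ, mul_mul_transpose_mem_rowColMatrices hB A⟩
  map_add' m n := by simp [Matrix.mul_add, Matrix.add_mul]
  map_smul' c m := by simp [Matrix.mul_smul, Matrix.smul_mul]
  left_inv m := Subtype.ext <| by
    obtain ⟨m, hm⟩ := m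
    calc B * (L * m * Lᵀ) * Bᵀ = B * L * m * (B * L)ᵀ := by
          simp only [transpose_mul, Matrix.mul_assoc]
      _ = (B * L * mᵀ)ᵀ := by
          rw [mul_mul_eq_self_of_forall_transpose_mem hBL fun j => (hm j).2,
            transpose_mul _ mᵀ, transpose_transpose]
      _ = m := by
          rw [mul_mul_eq_self_of_forall_transpose_mem hBL (m := mᵀ) fun j => (hm j).1,
            transpose_transpose]
  right_inv A := by
    change L * (B * A * Bᵀ) * Lᵀ = A
    rw [← Matrix.mul_assoc, ← Matrix.mul_assoc, hLB, Matrix.one_mul, Matrix.mul_assoc,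
      ← transpose_mul, hLB, transpose_one, Matrix.mul_one]

end Coordinates

variable [Fintype ι] [DecidableEq ι]

theorem exists_coordinate_matrices (Z : Submodule K (ι → K)) :
    ∃ (B : Matrix ι (Fin (finrank K Z)) K) (L : Matrix (Fin (finrank K Z)) ι K),
      L * B = 1 ∧ (∀ c, B *ᵥ c ∈ Z) ∧ ∀ z ∈ Z, B *ᵥ (L *ᵥ z) = z := by
  obtain ⟨π, hπ⟩ := Z.subtype.exists_leftInverse_of_injective Z.ker_subtype
  let b := (Module.finBasis K Z).equivFun
  refine ⟨LinearMap.toMatrix' (Z.subtype ∘ₗ b.symm.toLinearMap),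
    LinearMap.toMatrix' (b.toLinearMap ∘ₗ π), ?_, fun c => ?_, fun z hz => ?_⟩
  · rw [← LinearMap.toMatrix'_comp, LinearMap.comp_assoc, ← LinearMap.comp_assoc _ _ π, hπ]
    simp
  · rw [LinearMap.toMatrix'_mulVec]
    exact (b.symm c).2
  · have hπz : π z = ⟨z, hz⟩ := LinearMap.congr_fun hπ ⟨z, hz⟩
    simp [LinearMap.toMatrix'_mulVec, hπz]

theorem finrank_rowColMatrices (Z : Submodule K (ι → K)) :
    finrank K Z.rowColMatrices = finrank K Z ^ 2 := by
  obtain ⟨B, L, hLB, hB, hBL⟩ := Z.exists_coordinate_matrices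
  rw [(rowColMatricesEquiv hLB hB hBL).finrank_eq, finrank_matrix, Fintype.card_fin,
    finrank_self, Nat.mul_one, sq]

end Submodule

namespace SimpleGraph

section Boundary

variable {V : Type*} [DecidableEq V] (G : SimpleGraph V) [DecidableRel G.Adj]

theorem incMatrix_apply_of_mem_edgeSet {R : Type*} [Zero R] [One R] {e : Sym2 V}
    (he : e ∈ G.edgeSet) (v : V) : G.incMatrix R v e = if v ∈ e then 1 else 0 := by
  simp [incMatrix_apply', incidenceSet, he]

variable [Fintype V]

noncomputable def boundary : (G.edgeSet → ZMod 2) →ₗ[ZMod 2] V → ZMod 2 :=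
  mulVecLin ((G.incMatrix (ZMod 2)).submatrix id (↑))

noncomputable def cycleSpace : Submodule (ZMod 2) (G.edgeSet → ZMod 2) :=
  LinearMap.ker G.boundary

theorem boundary_single_edge {u w : V} (h : G.Adj u w) :
    G.boundary (Pi.single ⟨s(u, w), G.mem_edgeSet.2 h⟩ 1) = Pi.single u 1 + Pi.single w 1 := by
  funext v
  simp only [boundary, mulVecLin_apply, mulVec_single_one, col_apply, submatrix_apply,
    id, Pi.add_apply, Pi.single_apply]
  rw [G.incMatrix_apply_of_mem_edgeSet (G.mem_edgeSet.2 h)]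
  rcases eq_or_ne v u with rfl | hvu
  · simp [h.ne]
  · simp [hvu]

theorem sum_boundary_apply (x : G.edgeSet → ZMod 2) : ∑ v, G.boundary x v = 0 := by
  simp only [boundary, mulVecLin_apply, mulVec, dotProduct, submatrix_apply, id]
  rw [Finset.sum_comm]
  refine Finset.sum_eq_zero fun e _ => ?_
  rw [← Finset.sum_mul, G.sum_incMatrix_apply_of_mem_edgeSet e.2]
  exact zero_mul _

theorem single_add_single_mem_range_boundary {u w : V} (h : G.Reachable u w) :
    Pi.single u 1 + Pi.single w 1 ∈ LinearMap.range G.boundary := by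
  have two : (1 : ZMod 2) + 1 = 0 := rfl
  obtain ⟨p⟩ := h
  induction p with
  | nil =>
    rw [← Pi.single_add, two, Pi.single_zero]
    exact zero_mem _
  | @cons u v w huv p ih =>
    have : (Pi.single u 1 + Pi.single w 1 : V → ZMod 2)
        = (Pi.single u 1 + Pi.single v 1) + (Pi.single v 1 + Pi.single w 1) := by
      rw [add_assoc, ← add_assoc (Pi.single v 1), ← Pi.single_add, two, Pi.single_zero, zero_add]
    rw [this]
    exact add_mem ⟨_, G.boundary_single_edge huv⟩ ih

theorem range_boundary (hG : G.Connected) :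
    LinearMap.range G.boundary =
      LinearMap.ker (Fintype.linearCombination (ZMod 2) fun _ : V => (1 : ZMod 2)) := by
  refine le_antisymm ?_ fun g hg => ?_
  · rintro _ ⟨x, rfl⟩
    simp only [LinearMap.mem_ker, Fintype.linearCombination_apply, smul_eq_mul, mul_one,
      sum_boundary_apply]
  obtain ⟨v₀⟩ := hG.nonempty
  have hsum : ∑ v, g v = 0 := by
    simpa only [LinearMap.mem_ker, Fintype.linearCombination_apply, smul_eq_mul, mul_one]
      using hg
  have hdecomp : g = ∑ v, g v • (Pi.single v 1 + Pi.single v₀ 1) := by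
    simpa only [smul_add, sum_add_distrib, ← sum_smul, hsum, zero_smul, add_zero]
      using pi_eq_sum_univ' g
  rw [hdecomp]
  exact sum_mem fun v _ =>
    Submodule.smul_mem _ _ (G.single_add_single_mem_range_boundary (hG.preconnected v v₀))

theorem finrank_cycleSpace (hG : G.Connected) :
    finrank (ZMod 2) G.cycleSpace = Fintype.card G.edgeSet + 1 - Fintype.card V := by
  set ε := Fintype.linearCombination (ZMod 2) fun _ : V => (1 : ZMod 2)
  obtain ⟨v₀⟩ := hG.nonempty
  have hε : LinearMap.range ε = ⊤ := LinearMap.range_eq_top.2 fun c =>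
    ⟨Pi.single v₀ c, by simp [ε, Fintype.linearCombination_apply]⟩
  have hV : finrank (ZMod 2) (LinearMap.ker ε) + 1 = Fintype.card V := by
    rw [add_comm, ← finrank_self (ZMod 2), ← finrank_top (ZMod 2) (ZMod 2), ← hε,
      LinearMap.finrank_range_add_finrank_ker, finrank_fintype_fun_eq_card]
  have hE : finrank (ZMod 2) (LinearMap.ker ε) + finrank (ZMod 2) G.cycleSpace
      = Fintype.card G.edgeSet := by
    rw [← range_boundary G hG, cycleSpace, LinearMap.finrank_range_add_finrank_ker,
      finrank_fintype_fun_eq_card]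
  omega

theorem boundary_indicator_apply {s : Finset (Sym2 V)} (hs : ∀ e ∈ s, e ∈ G.edgeSet) (v : V) :
    G.boundary (fun e => if (e : Sym2 V) ∈ s then 1 else 0) v = #{e ∈ s | v ∈ e} := by
  have hsub : {e ∈ s | v ∈ e} ⊆ G.edgeFinset := fun e he =>
    G.mem_edgeFinset.2 (hs e (mem_filter.1 he).1)
  simp only [boundary, mulVecLin_apply, mulVec, dotProduct, submatrix_apply, id]
  rw [Finset.sum_set_coe (f := fun e => G.incMatrix (ZMod 2) v e * if e ∈ s then 1 else 0)]
  change ∑ e ∈ G.edgeFinset, _ = _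
  calc _ = ∑ e ∈ G.edgeFinset, if e ∈ {e ∈ s | v ∈ e} then (1 : ZMod 2) else 0 :=
        sum_congr rfl fun e he => by
          rw [G.incMatrix_apply_of_mem_edgeSet (G.mem_edgeFinset.1 he)]
          simp only [mem_filter, ite_zero_mul_ite_zero, one_mul, and_comm]
    _ = _ := by rw [sum_ite_mem, inter_eq_right.2 hsub, sum_const, nsmul_one]

theorem isOneCycle_iff {s : Finset (Sym2 V)} :
    IsOneCycle G s ↔ (∀ e ∈ s, e ∈ G.edgeSet) ∧
      (fun e : G.edgeSet => if (e : Sym2 V) ∈ s then (1 : ZMod 2) else 0) ∈ G.cycleSpace := by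
  refine and_congr_right fun hs => ?_
  rw [cycleSpace, LinearMap.mem_ker, funext_iff]
  refine forall_congr' fun v => ?_
  rw [G.boundary_indicator_apply hs, Pi.zero_apply, ZMod.natCast_eq_zero_iff_even]

end Boundary

section Pairs

variable {V : Type*} [Fintype V] (G : SimpleGraph V) [DecidableRel G.Adj]

def pairSupport (m : Matrix G.edgeSet G.edgeSet (ZMod 2)) : Finset (Sym2 V × Sym2 V) :=
  ({q | m q.1 q.2 = 1} : Finset (G.edgeSet × G.edgeSet)).map
    ((Function.Embedding.subtype _).prodMap (Function.Embedding.subtype _))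

theorem coe_mem_pairSupport {m : Matrix G.edgeSet G.edgeSet (ZMod 2)} {σ τ : G.edgeSet} :
    ((σ : Sym2 V), (τ : Sym2 V)) ∈ G.pairSupport m ↔ m σ τ = 1 := by
  simp [pairSupport]

theorem mem_edgeSet_of_mem_pairSupport {m : Matrix G.edgeSet G.edgeSet (ZMod 2)} {p}
    (hp : p ∈ G.pairSupport m) : p.1 ∈ G.edgeSet ∧ p.2 ∈ G.edgeSet := by
  obtain ⟨⟨σ, τ⟩, -, rfl⟩ := mem_map.1 hp
  exact ⟨σ.2, τ.2⟩

variable [DecidableEq V]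

def pairIndicator (C : Finset (Sym2 V × Sym2 V)) : Matrix G.edgeSet G.edgeSet (ZMod 2) :=
  .of fun σ τ => if ((σ : Sym2 V), (τ : Sym2 V)) ∈ C then 1 else 0

theorem pairIndicator_pairSupport (m : Matrix G.edgeSet G.edgeSet (ZMod 2)) :
    G.pairIndicator (G.pairSupport m) = m := by
  ext σ τ
  have : ∀ x : ZMod 2, (if x = 1 then 1 else 0) = x := by decide
  simp only [pairIndicator, of_apply, coe_mem_pairSupport, this]

theorem pairSupport_pairIndicator {C : Finset (Sym2 V × Sym2 V)}
    (hC : ∀ p ∈ C, p.1 ∈ G.edgeSet ∧ p.2 ∈ G.edgeSet) :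
    G.pairSupport (G.pairIndicator C) = C := by
  ext ⟨σ, τ⟩
  refine ⟨fun hp => ?_, fun hp => ?_⟩
  · obtain ⟨hσ, hτ⟩ := G.mem_edgeSet_of_mem_pairSupport hp
    have := (G.coe_mem_pairSupport (σ := ⟨σ, hσ⟩) (τ := ⟨τ, hτ⟩)).1 hp
    simpa [pairIndicator] using this
  · obtain ⟨hσ, hτ⟩ := hC _ hp
    exact (G.coe_mem_pairSupport (σ := ⟨σ, hσ⟩) (τ := ⟨τ, hτ⟩)).2
      (by simp [pairIndicator, hp])

theorem isCellular2Cycle_iff {C : Finset (Sym2 V × Sym2 V)} :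
    IsCellular2Cycle G C ↔ (∀ p ∈ C, p.1 ∈ G.edgeSet ∧ p.2 ∈ G.edgeSet) ∧
      G.pairIndicator C ∈ G.cycleSpace.rowColMatrices := by
  refine and_congr_right fun hC => ?_
  have hrow : ∀ σ, IsOneCycle G ((C.filter fun p => p.1 = σ).image Prod.snd) ↔
      (fun τ : G.edgeSet => if (σ, (τ : Sym2 V)) ∈ C then (1 : ZMod 2) else 0) ∈
        G.cycleSpace := by
    intro σ
    rw [isOneCycle_iff, and_iff_right (by simpa using fun e he => (hC (σ, e) he).2)]
    simp
  have hcol : ∀ σ, IsOneCycle G ((C.filter fun p => p.2 = σ).image Prod.fst) ↔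
      (fun τ : G.edgeSet => if ((τ : Sym2 V), σ) ∈ C then (1 : ZMod 2) else 0) ∈
        G.cycleSpace := by
    intro σ
    rw [isOneCycle_iff, and_iff_right (by simpa using fun e he => (hC (e, σ) he).1)]
    simp
  simp only [hrow, hcol, Submodule.mem_rowColMatrices]
  refine ⟨fun h σ => h σ, fun h σ => ?_⟩
  by_cases hσ : σ ∈ G.edgeSet
  · exact h ⟨σ, hσ⟩
  · have hzero : ∀ τ, (σ, τ) ∉ C ∧ (τ, σ) ∉ C := fun τ =>
      ⟨fun h => hσ (hC _ h).1, fun h => hσ (hC _ h).2⟩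
    simp only [hzero, if_false]
    exact ⟨zero_mem _, zero_mem _⟩

noncomputable def cellular2CycleEquiv :
    {C : Finset (Sym2 V × Sym2 V) // IsCellular2Cycle G C} ≃ G.cycleSpace.rowColMatrices where
  toFun C := ⟨G.pairIndicator C, (G.isCellular2Cycle_iff.1 C.2).2⟩
  invFun m := ⟨G.pairSupport m, G.isCellular2Cycle_iff.2
    ⟨fun _ => G.mem_edgeSet_of_mem_pairSupport, by rw [pairIndicator_pairSupport]; exact m.2⟩⟩
  left_inv C := Subtype.ext (G.pairSupport_pairIndicator C.2.1)
  right_inv m := Subtype.ext (G.pairIndicator_pairSupport m)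

end Pairs

end SimpleGraph

/-- For a finite connected simple graph `K` with `V` vertices and `E` edges, the number
of cellular 2-cycles in `K²` equals `2 ^ ((E - V + 1)²)`. -/
theorem card_cellular2Cycles {V : Type*} [Fintype V] [DecidableEq V]
    (G : SimpleGraph V) [DecidableRel G.Adj] (hconn : G.Connected) :
    Nat.card {C : Finset (Sym2 V × Sym2 V) // IsCellular2Cycle G C}
      = 2 ^ ((G.edgeFinset.card + 1 - Fintype.card V) ^ 2) := by
  calc Nat.card {C : Finset (Sym2 V × Sym2 V) // IsCellular2Cycle G C}
      = Nat.card G.cycleSpace.rowColMatrices := Nat.card_congr G.cellular2CycleEquiv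
    _ = 2 ^ finrank (ZMod 2) G.cycleSpace.rowColMatrices := by
      rw [Module.natCard_eq_pow_finrank (K := ZMod 2), Nat.card_zmod]
    _ = 2 ^ ((G.edgeFinset.card + 1 - Fintype.card V) ^ 2) := by
      rw [Submodule.finrank_rowColMatrices, G.finrank_cycleSpace hconn, SimpleGraph.edgeFinset_card]
end
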